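/- arXiv:1804.03038 — 4 statements merged into one kernel-verified Lean document; each statement's English description precedes it below -/
import Mathlib

section
/- Let a > 0 and b > 0, and let p(z) = z^(a−1)·(1−z)^(b−1)/B(a,b) for z ∈ (0,1), where B(a,b) is the Beta function. Then for every z ∈ (0,1), 2·∫_0^z (a/(a+b) − t)·p(t) dt = (2/(a+b))·z·(1−z)·p(z). (Equivalently, with drift μ(z) = −(z − a/(a+b)), the relationship σ²(z) = 2(∫_0^z μ(t)p(t)dt)/p(z) yields σ²(z) = (2/(a+b))·z(1−z).) -/
open Set Real

/-!
The drift integral has the closed-form antiderivative `t ↦ t^a (1-t)^b`: its derivative is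
`t^(a-1) (1-t)^(b-1) (a - (a+b) t)`, which is `(a+b)` times `(a/(a+b) - t)` times the unnormalised
Beta density. Since `t^a` vanishes at `0` for `a > 0` and `t^(a-1)` is integrable there, the
fundamental theorem of calculus gives `∫_0^z (a/(a+b) - t) p(t) dt = z^a (1-z)^b / ((a+b) B(a,b))`,
and `z^a (1-z)^b = z (1-z) · z^(a-1) (1-z)^(b-1)`.
-/

theorem hasDerivAt_rpow_mul_one_sub_rpow {a b x : ℝ} (hx0 : 0 < x) (hx1 : x < 1) :
    HasDerivAt (fun t => t ^ a * (1 - t) ^ b)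
      (x ^ (a - 1) * (1 - x) ^ (b - 1) * (a - (a + b) * x)) x := by
  have hx1' : 1 - x ≠ 0 := sub_ne_zero.mpr hx1.ne'
  have hpow : HasDerivAt (fun t : ℝ => t ^ a) (a * x ^ (a - 1)) x :=
    hasDerivAt_rpow_const (Or.inl hx0.ne')
  have hpow_one_sub : HasDerivAt (fun t : ℝ => (1 - t) ^ b) (b * (1 - x) ^ (b - 1) * -1) x :=
    (hasDerivAt_rpow_const (Or.inl hx1')).comp x ((hasDerivAt_id x).const_sub 1)
  refine (hpow.mul hpow_one_sub).congr_deriv ?_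
  rw [rpow_sub_one hx0.ne', rpow_sub_one hx1']
  field_simp
  ring

theorem integral_rpow_mul_one_sub_rpow_mul {a b z : ℝ} (ha : 0 < a) (hz0 : 0 ≤ z) (hz1 : z < 1) :
    ∫ t in (0 : ℝ)..z, t ^ (a - 1) * (1 - t) ^ (b - 1) * (a - (a + b) * t) =
      z ^ a * (1 - z) ^ b := by
  have hone_sub : ∀ t ∈ Icc 0 z, 1 - t ≠ 0 := fun t ht => by linarith [ht.2]
  have hcont : ContinuousOn (fun t : ℝ => t ^ a * (1 - t) ^ b) (Icc 0 z) :=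
    (continuousOn_id.rpow_const fun _ _ => Or.inr ha.le).mul
      ((continuousOn_const.sub continuousOn_id).rpow_const fun t ht => Or.inl (hone_sub t ht))
  have hint : IntervalIntegrable
      (fun t : ℝ => t ^ (a - 1) * (1 - t) ^ (b - 1) * (a - (a + b) * t)) MeasureTheory.volume 0 z := by
    simp_rw [mul_assoc]
    refine (intervalIntegral.intervalIntegrable_rpow' (by linarith)).mul_continuousOn ?_
    rw [uIcc_of_le hz0]
    exact ((continuousOn_const.sub continuousOn_id).rpow_const
      fun t ht => Or.inl (hone_sub t ht)).mul (by fun_prop)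
  rw [intervalIntegral.integral_eq_sub_of_hasDerivAt_of_le hz0 hcont
    (fun x hx => hasDerivAt_rpow_mul_one_sub_rpow hx.1 (hx.2.trans hz1)) hint]
  simp [zero_rpow ha.ne']

/-- Table I, Beta entry: for the Beta density `p(z) = z^(a-1)(1-z)^(b-1)/B(a,b)` on `(0,1)`,
`2·∫_0^z (a/(a+b) - t)·p(t) dt = (2/(a+b))·z(1-z)·p(z)`, i.e. drift
`μ(z) = -(z - a/(a+b))` yields diffusion `σ²(z) = (2/(a+b))·z(1-z)`. -/
theorem beta_ito_diffusion (a b : ℝ) (ha : 0 < a) (hb : 0 < b) :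
    ∀ z ∈ Ioo (0 : ℝ) 1,
      2 * ∫ t in (0:ℝ)..z,
          (a / (a + b) - t) *
            (t ^ (a - 1) * (1 - t) ^ (b - 1) /
              (Real.Gamma a * Real.Gamma b / Real.Gamma (a + b))) =
      (2 / (a + b)) * z * (1 - z) *
        (z ^ (a - 1) * (1 - z) ^ (b - 1) /
          (Real.Gamma a * Real.Gamma b / Real.Gamma (a + b))) := by
  rintro z ⟨hz0, hz1⟩
  set B := Real.Gamma a * Real.Gamma b / Real.Gamma (a + b)
  have hab : a + b ≠ 0 := by positivity
  have hintegrand : ∀ t : ℝ, (a / (a + b) - t) * (t ^ (a - 1) * (1 - t) ^ (b - 1) / B) =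
      ((a + b)⁻¹ * B⁻¹) * (t ^ (a - 1) * (1 - t) ^ (b - 1) * (a - (a + b) * t)) := fun t => by
    field_simp
  simp_rw [hintegrand, intervalIntegral.integral_const_mul,
    integral_rpow_mul_one_sub_rpow_mul ha hz0.le hz1, rpow_sub_one hz0.ne',
    rpow_sub_one (sub_ne_zero.mpr hz1.ne')]
  field_simp
end

section
/- Let a > 0 and b > 0, and let p(z) = b^a·z^(a−1)·exp(−b·z)/Γ(a) for z > 0, where Γ is the Gamma function. Then for every z > 0, 2·∫_0^z (a/b − t)·p(t) dt = (2z/b)·p(z). (Equivalently, with drift μ(z) = −(z − a/b), the relationship σ²(z) = 2(∫_0^z μ(t)p(t)dt)/p(z) yields σ²(z) = 2z/b.) -/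
open Set Real

/-! Up to the factor `b ^ (a - 1) / Γ(a)`, `(t / b) · p(t)` is `t ^ a · exp (-b t)`, which vanishes
at `0` and has derivative `(a - b t) · t ^ (a - 1) · exp (-b t)`; the fundamental theorem of calculus
gives the identity. -/

theorem hasDerivAt_rpow_mul_exp_neg_mul {a x : ℝ} (b : ℝ) (hx : x ≠ 0) :
    HasDerivAt (fun t => t ^ a * exp (-b * t)) ((a - b * x) * x ^ (a - 1) * exp (-b * x)) x := by
  refine ((hasDerivAt_rpow_const (p := a) (Or.inl hx)).mul
    ((hasDerivAt_id x).const_mul (-b)).exp).congr_deriv ?_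
  simp only [id, mul_one]
  rw [rpow_sub_one hx]
  field_simp
  ring

theorem intervalIntegral_sub_mul_rpow_mul_exp_neg_mul {a : ℝ} (ha : 0 < a) (b : ℝ) {z : ℝ}
    (hz : 0 ≤ z) :
    ∫ t in (0:ℝ)..z, (a - b * t) * t ^ (a - 1) * exp (-b * t) = z ^ a * exp (-b * z) := by
  have hcont : ContinuousOn (fun t : ℝ => t ^ a * exp (-b * t)) (Icc 0 z) :=
    ((continuous_rpow_const ha.le).mul (by fun_prop)).continuousOn
  have hderiv : ∀ x ∈ Ioo 0 z,
      HasDerivAt (fun t => t ^ a * exp (-b * t)) ((a - b * x) * x ^ (a - 1) * exp (-b * x)) x :=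
    fun x hx => hasDerivAt_rpow_mul_exp_neg_mul b hx.1.ne'
  have hint : IntervalIntegrable (fun t : ℝ => (a - b * t) * t ^ (a - 1) * exp (-b * t))
      MeasureTheory.volume 0 z :=
    ((intervalIntegral.intervalIntegrable_rpow' (by linarith)).continuousOn_mul
      (by fun_prop)).mul_continuousOn (by fun_prop)
  rw [intervalIntegral.integral_eq_sub_of_hasDerivAt_of_le hz hcont hderiv hint,
    zero_rpow ha.ne', zero_mul, sub_zero]

/-- Table I, Gamma entry: for the Gamma density `p(z) = b^a z^(a-1) e^{-bz}/Γ(a)` on `(0,∞)`,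
`2·∫_0^z (a/b - t)·p(t) dt = (2z/b)·p(z)`, i.e. drift `μ(z) = -(z - a/b)` yields
diffusion `σ²(z) = 2z/b`. -/
theorem gamma_ito_diffusion (a b : ℝ) (ha : 0 < a) (hb : 0 < b) :
    ∀ z : ℝ, 0 < z →
      2 * ∫ t in (0:ℝ)..z,
          (a / b - t) * (b ^ a * t ^ (a - 1) * Real.exp (-b * t) / Real.Gamma a) =
      (2 * z / b) * (b ^ a * z ^ (a - 1) * Real.exp (-b * z) / Real.Gamma a) := by
  intro z hz
  have hb_pow : b ^ a = b ^ (a - 1) * b := by rw [rpow_sub_one hb.ne']; field_simp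
  calc 2 * ∫ t in (0:ℝ)..z,
          (a / b - t) * (b ^ a * t ^ (a - 1) * exp (-b * t) / Gamma a)
      _ = 2 * ∫ t in (0:ℝ)..z,
          b ^ (a - 1) / Gamma a * ((a - b * t) * t ^ (a - 1) * exp (-b * t)) := by
        congr 1
        refine intervalIntegral.integral_congr fun t _ => ?_
        rw [hb_pow]
        field_simp
      _ = 2 * (b ^ (a - 1) / Gamma a * (z ^ a * exp (-b * z))) := by
        rw [intervalIntegral.integral_const_mul,
          intervalIntegral_sub_mul_rpow_mul_exp_neg_mul ha b hz.le]
      _ = (2 * z / b) * (b ^ a * z ^ (a - 1) * exp (-b * z) / Gamma a) := by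
        rw [hb_pow, rpow_sub_one hz.ne']
        field_simp
end

section
/- Let a ∈ ℝ and b > 0, and let p(z) = exp(−|z−a|/b)/(2b) be the Laplace density with location a and scale b. Then for every z ∈ ℝ, 2·∫_{−∞}^z (a − t)·p(t) dt = (2b·|z−a| + 2b²)·p(z). (Equivalently, with drift μ(z) = −(z−a), the relationship σ²(z) = 2(∫_{−∞}^z μ(t)p(t)dt)/p(z) yields σ²(z) = 2b|z−a| + 2b².) -/
/-!
With `p` the Laplace density, `F(t) = (b|t - a| + b²) p(t)` (that is, `σ² p / 2`) is an
antiderivative of `(a - t) p(t)` on all of `ℝ`: on each side of `a` this is a one-line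
computation, and both one-sided derivatives at `a` vanish. Since `F → 0` at `-∞`, the identity
is the fundamental theorem of calculus on `(-∞, z]`. Integrability on `(-∞, a]` comes for free
from `F` being monotone there.
-/

open MeasureTheory Set Real Filter Topology

theorem integrableOn_Iic_deriv_of_nonneg' {g g' : ℝ → ℝ} {a l : ℝ}
    (hderiv : ∀ x ∈ Iic a, HasDerivAt g (g' x) x) (g'pos : ∀ x ∈ Iio a, 0 ≤ g' x)
    (hg : Tendsto g atBot (𝓝 l)) : IntegrableOn g' (Iic a) := by
  have hneg : IntegrableOn (fun x => g' (-x)) (Ici (-a)) := by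
    refine Iff.mpr integrableOn_Ici_iff_integrableOn_Ioi
      (integrableOn_Ioi_deriv_of_nonneg' (g := fun x => -g (-x)) (l := -l) (fun x hx => ?_)
        (fun x hx => g'pos (-x) (show -x < a from neg_lt.mp hx)) ?_)
    · exact ((hderiv (-x) (show -x ≤ a from neg_le.mp hx)).comp x
        (hasDerivAt_neg x)).neg.congr_deriv (by ring)
    · exact (hg.comp tendsto_neg_atTop_atBot).neg
  simpa using hneg.comp_neg_Iic

theorem hasDerivAt_of_hasDerivWithinAt_Iic_Ici {f f' : ℝ → ℝ} {a : ℝ}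
    (hle : ∀ x ∈ Iic a, HasDerivWithinAt f (f' x) (Iic a) x)
    (hge : ∀ x ∈ Ici a, HasDerivWithinAt f (f' x) (Ici a) x) (x : ℝ) :
    HasDerivAt f (f' x) x := by
  rcases lt_trichotomy x a with hx | rfl | hx
  · exact (hle x hx.le).hasDerivAt (Iic_mem_nhds hx)
  · simpa [Iic_union_Ici] using (hle x self_mem_Iic).union (hge x self_mem_Ici)
  · exact (hge x hx.le).hasDerivAt (Ici_mem_nhds hx)

noncomputable def laplaceDensity (a b t : ℝ) : ℝ := exp (-|t - a| / b) / (2 * b)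

theorem hasDerivAt_affine_mul_exp_neg_div {b : ℝ} (hb : b ≠ 0) (s : ℝ) :
    HasDerivAt (fun s => (b * s + b ^ 2) * (exp (-s / b) / (2 * b)))
      (-s * (exp (-s / b) / (2 * b))) s := by
  have hexp : HasDerivAt (fun s => exp (-s / b)) (exp (-s / b) * (-1 / b)) s :=
    (hasDerivAt_exp _).comp s ((hasDerivAt_neg s).div_const b)
  refine ((((hasDerivAt_id' s).const_mul b).add_const (b ^ 2)).mul
    (hexp.div_const (2 * b))).congr_deriv ?_
  field_simp
  ring

theorem tendsto_affine_mul_exp_neg_div_atTop {b : ℝ} (hb : 0 < b) :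
    Tendsto (fun s => (b * s + b ^ 2) * (exp (-s / b) / (2 * b))) atTop (𝓝 0) := by
  have h : Tendsto (fun u => (u ^ 1 * exp (-u) + exp (-u)) * (b / 2)) atTop (𝓝 0) := by
    simpa using ((tendsto_pow_mul_exp_neg_atTop_nhds_zero 1).add
      tendsto_exp_neg_atTop_nhds_zero).mul_const (b / 2)
  refine (h.comp (tendsto_id.atTop_div_const hb)).congr fun s => ?_
  simp only [Function.comp, id, neg_div]
  field_simp

theorem hasDerivAt_laplace_antiderivative (a : ℝ) {b : ℝ} (hb : b ≠ 0) (t : ℝ) :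
    HasDerivAt (fun t => (b * |t - a| + b ^ 2) * laplaceDensity a b t)
      ((a - t) * laplaceDensity a b t) t := by
  refine hasDerivAt_of_hasDerivWithinAt_Iic_Ici (a := a)
    (f' := fun t => (a - t) * laplaceDensity a b t) (fun x hx => ?_) (fun x hx => ?_) t
  · have h := (hasDerivAt_affine_mul_exp_neg_div hb (a - x)).comp x
      ((hasDerivAt_id' x).const_sub a)
    have habs : ∀ y ∈ Iic a, |y - a| = a - y := fun y hy => by
      rw [abs_sub_comm, abs_of_nonneg (sub_nonneg.2 hy)]
    refine (h.hasDerivWithinAt.congr_of_mem (fun y hy => ?_) hx).congr_deriv ?_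
    · simp only [Function.comp, laplaceDensity, habs y hy]
    · simp only [laplaceDensity, habs x hx]
      ring_nf
  · have h := (hasDerivAt_affine_mul_exp_neg_div hb (x - a)).comp x
      ((hasDerivAt_id' x).sub_const a)
    have habs : ∀ y ∈ Ici a, |y - a| = y - a := fun y hy => abs_of_nonneg (sub_nonneg.2 hy)
    refine (h.hasDerivWithinAt.congr_of_mem (fun y hy => ?_) hx).congr_deriv ?_
    · simp only [Function.comp, laplaceDensity, habs y hy]
    · simp only [laplaceDensity, habs x hx]
      ring_nf

theorem tendsto_laplace_antiderivative_atBot (a : ℝ) {b : ℝ} (hb : 0 < b) :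
    Tendsto (fun t => (b * |t - a| + b ^ 2) * laplaceDensity a b t) atBot (𝓝 0) :=
  (tendsto_affine_mul_exp_neg_div_atTop hb).comp
    (tendsto_abs_atBot_atTop.comp (tendsto_atBot_add_const_right _ (-a) tendsto_id))

theorem integrableOn_Iic_sub_mul_laplaceDensity (a : ℝ) {b : ℝ} (hb : 0 < b) (z : ℝ) :
    IntegrableOn (fun t => (a - t) * laplaceDensity a b t) (Iic z) := by
  have hleft : IntegrableOn (fun t => (a - t) * laplaceDensity a b t) (Iic a) :=
    integrableOn_Iic_deriv_of_nonneg' (fun t _ => hasDerivAt_laplace_antiderivative a hb.ne' t)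
      (fun t ht => mul_nonneg (sub_nonneg.2 (le_of_lt ht)) (by unfold laplaceDensity; positivity))
      (tendsto_laplace_antiderivative_atBot a hb)
  have hcont : Continuous (fun t => (a - t) * laplaceDensity a b t) := by
    unfold laplaceDensity
    fun_prop
  exact (hleft.union hcont.integrableOn_Icc).mono_set Iic_subset_Iic_union_Icc

/-- Table I, Laplace entry: for the Laplace density `p(z) = e^{-|z-a|/b}/(2b)`,
`2·∫_{-∞}^z (a - t)·p(t) dt = (2b|z-a| + 2b²)·p(z)`, i.e. drift `μ(z) = -(z-a)`
yields diffusion `σ²(z) = 2b|z-a| + 2b²`. -/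
theorem laplace_ito_diffusion (a b : ℝ) (hb : 0 < b) :
    ∀ z : ℝ,
      2 * ∫ t in Iic z, (a - t) * (Real.exp (-|t - a| / b) / (2 * b)) =
      (2 * b * |z - a| + 2 * b ^ 2) * (Real.exp (-|z - a| / b) / (2 * b)) := by
  intro z
  have hFTC := integral_Iic_of_hasDerivAt_of_tendsto'
    (fun t _ => hasDerivAt_laplace_antiderivative a hb.ne' t)
    (integrableOn_Iic_sub_mul_laplaceDensity a hb z) (tendsto_laplace_antiderivative_atBot a hb)
  simp only [laplaceDensity, sub_zero] at hFTC
  rw [hFTC]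
  ring
end

section
/- Let a ∈ ℝ and b > 0, and let p(z) = exp(−|z−a|/b)/(2b) be the Laplace density with location a and scale b. Then for every z ∈ ℝ with z ≠ a, the second derivative of z ↦ (b·|z−a| + b²)·p(z) at z equals the first derivative of z ↦ (a − z)·p(z) at z; i.e., p satisfies the steady-state Fokker–Planck equation (1/2)·d²/dz²(σ²(z)p(z)) = d/dz(μ(z)p(z)) away from z = a, with μ(z) = −(z−a) and σ²(z) = 2b|z−a| + 2b². -/
/-! Near any `z ≠ a` we have `|x - a| = s (x - a)` with the fixed sign `s = sign (z - a)`. There the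
product rule and `s² = 1` give the zero-flux relation `(σ² p / 2)' = μ p` already at first order,
so the two sides of the equation are derivatives of functions that agree near `z`. -/

open Real Filter Topology

theorem hasDerivAt_half_sigma_sq_mul_laplace {a b s : ℝ} (hb : b ≠ 0) (hs : s ^ 2 = 1) (x : ℝ) :
    HasDerivAt (fun x => (b * (s * (x - a)) + b ^ 2) * (exp (-(s * (x - a)) / b) / (2 * b)))
      ((a - x) * (exp (-(s * (x - a)) / b) / (2 * b))) x := by
  have hlin : HasDerivAt (fun x => s * (x - a)) s x := by
    simpa using ((hasDerivAt_id x).sub_const a).const_mul s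
  have hexp := ((hlin.fun_neg.div_const b).exp).div_const (2 * b)
  refine (((hlin.const_mul b).add_const (b ^ 2)).fun_mul hexp).congr_deriv ?_
  field_simp
  linear_combination (a - x) * hs

theorem eventually_abs_sub_eq_sign_mul {a z : ℝ} (hz : z ≠ a) :
    ∀ᶠ x in 𝓝 z, |x - a| = Real.sign (z - a) * (x - a) := by
  rcases hz.lt_or_gt with h | h
  · filter_upwards [eventually_lt_nhds h] with x hx
    rw [Real.sign_of_neg (sub_neg.2 h), abs_of_neg (sub_neg.2 hx)]
    ring
  · filter_upwards [eventually_gt_nhds h] with x hx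
    rw [Real.sign_of_pos (sub_pos.2 h), abs_of_pos (sub_pos.2 hx), one_mul]

theorem Real.sign_sq_of_ne_zero {r : ℝ} (hr : r ≠ 0) : Real.sign r ^ 2 = 1 := by
  rcases Real.sign_apply_eq_of_ne_zero r hr with h | h <;> simp [h]

/-- Steady-state Fokker–Planck equation for the Laplace entry of Table I:
with `p(z) = e^{-|z-a|/b}/(2b)`, `μ(z) = -(z-a)` and `σ²(z) = 2b|z-a| + 2b²`,
we have `(1/2)·(σ²p)'' = (μp)'` away from `z = a`. -/
theorem laplace_fokker_planck (a b : ℝ) (hb : 0 < b) :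
    ∀ z : ℝ, z ≠ a →
      deriv (deriv
        (fun z => (b * |z - a| + b ^ 2) * (Real.exp (-|z - a| / b) / (2 * b)))) z =
      deriv
        (fun z => (a - z) * (Real.exp (-|z - a| / b) / (2 * b))) z := by
  intro z hz
  set s := Real.sign (z - a)
  have habs : ∀ φ : ℝ → ℝ → ℝ, (fun x => φ x |x - a|) =ᶠ[𝓝 z] fun x => φ x (s * (x - a)) :=
    fun φ => (eventually_abs_sub_eq_sign_mul hz).mono fun x hx => by simp only [hx, s]
  have hzero_flux : deriv (fun z => (b * |z - a| + b ^ 2) * (exp (-|z - a| / b) / (2 * b)))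
      =ᶠ[𝓝 z] fun x => (a - x) * (exp (-(s * (x - a)) / b) / (2 * b)) := by
    filter_upwards [(habs fun x t => (b * t + b ^ 2) * (exp (-t / b) / (2 * b))).deriv]
      with x hx
    exact hx.trans (hasDerivAt_half_sigma_sq_mul_laplace hb.ne'
      (sign_sq_of_ne_zero (sub_ne_zero.2 hz)) x).deriv
  rw [hzero_flux.deriv_eq, (habs fun x t => (a - x) * (exp (-t / b) / (2 * b))).deriv_eq]
end
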